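/- Suppose r is a positive function on [0,2π] of the form 1/r(t) = a/r₀(t) + b cos t + c sin t with a > 0, satisfying the constraints (1/2)∫ r² = 1, ∫ r³ cos t dt = 0, ∫ r³ sin t dt = 0. Then for any other positive continuous r* satisfying the same three constraints, ∫₀^{2π} r*³(t)/r(t) dt = a · ∫₀^{2π} r*³(t)/r₀(t) dt and ∫₀^{2π} r³(t)/r(t) dt = a · ∫₀^{2π} r³(t)/r₀(t) dt. In particular, if r* also minimizes ∫ r³/r₀ subject to the constraints, then r* minimizes ∫ s³/r subject to the same constraints, hence r* = r. -/
import Mathlib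


open Real Set

/-- A feasible solution of the variational problem `VP(r₀)`: a positive continuous
radial function with the centre-of-gravity and area constraints. -/
def Feasible (s : ℝ → ℝ) : Prop :=
  ContinuousOn s (Icc 0 (2 * π)) ∧ (∀ t ∈ Icc (0 : ℝ) (2 * π), 0 < s t) ∧
  (1 / 2) * (∫ t in (0 : ℝ)..(2 * π), s t ^ 2) = 1 ∧
  (∫ t in (0 : ℝ)..(2 * π), s t ^ 3 * Real.cos t) = 0 ∧
  (∫ t in (0 : ℝ)..(2 * π), s t ^ 3 * Real.sin t) = 0

/-- A nonnegative continuous function on `[0, 2π]` with zero integral vanishes. -/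
lemma zero_of_nonneg_of_integral_zero (f : ℝ → ℝ) (hc : ContinuousOn f (Icc 0 (2 * π)))
    (h0 : ∀ t ∈ Icc (0:ℝ) (2*π), 0 ≤ f t)
    (hint : (∫ t in (0:ℝ)..(2*π), f t) = 0) :
    ∀ t ∈ Icc (0:ℝ) (2*π), f t = 0 := by
  by_contra h
  push_neg at h
  obtain ⟨t₀, ht₀, hne⟩ := h
  have hε : 0 < f t₀ := lt_of_le_of_ne (h0 t₀ ht₀) (Ne.symm hne)
  have hcw := hc t₀ ht₀
  rw [Metric.continuousWithinAt_iff] at hcw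
  obtain ⟨δ, hδ, hδ'⟩ := hcw (f t₀ / 2) (by positivity)
  set u := max 0 (t₀ - δ/2) with hu
  set v := min (2*π) (t₀ + δ/2) with hv
  have h2π : (0:ℝ) < 2*π := by positivity
  have huv : u < v := by
    apply max_lt <;> apply lt_min
    · exact h2π
    · linarith [ht₀.1]
    · linarith [ht₀.2]
    · linarith
  have hu0 : (0:ℝ) ≤ u := le_max_left _ _
  have hv2 : v ≤ 2*π := min_le_left _ _
  have hsub : Icc u v ⊆ Icc 0 (2*π) := Icc_subset_Icc hu0 hv2
  have hmid : ∀ x ∈ Icc u v, f t₀ / 2 ≤ f x := by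
    intro x hx
    have h1 : dist x t₀ < δ := by
      rw [Real.dist_eq, abs_lt]
      constructor
      · linarith [hx.1.trans' (le_max_right 0 (t₀ - δ/2))]
      · have : x ≤ t₀ + δ/2 := hx.2.trans (min_le_right _ _)
        linarith
    have := hδ' (hsub hx) h1
    rw [Real.dist_eq, abs_lt] at this
    linarith [this.1]
  have hi1 : IntervalIntegrable f MeasureTheory.volume 0 u := by
    apply ContinuousOn.intervalIntegrable
    rw [uIcc_of_le hu0]
    exact hc.mono (Icc_subset_Icc le_rfl (huv.le.trans hv2))
  have hi2 : IntervalIntegrable f MeasureTheory.volume u v := by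
    apply ContinuousOn.intervalIntegrable
    rw [uIcc_of_le huv.le]
    exact hc.mono hsub
  have hi3 : IntervalIntegrable f MeasureTheory.volume v (2*π) := by
    apply ContinuousOn.intervalIntegrable
    rw [uIcc_of_le hv2]
    exact hc.mono (Icc_subset_Icc (hu0.trans huv.le) le_rfl)
  have hsplit : (∫ t in (0:ℝ)..u, f t) + ((∫ t in u..v, f t) + (∫ t in v..(2*π), f t))
      = ∫ t in (0:ℝ)..(2*π), f t := by
    rw [intervalIntegral.integral_add_adjacent_intervals hi2 hi3,
      intervalIntegral.integral_add_adjacent_intervals hi1 (hi2.trans hi3)]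
  have hnn1 : 0 ≤ ∫ t in (0:ℝ)..u, f t :=
    intervalIntegral.integral_nonneg hu0
      (fun x hx => h0 x (Icc_subset_Icc le_rfl (huv.le.trans hv2) hx))
  have hnn3 : 0 ≤ ∫ t in v..(2*π), f t :=
    intervalIntegral.integral_nonneg hv2
      (fun x hx => h0 x (Icc_subset_Icc (hu0.trans huv.le) le_rfl hx))
  have hpos : (v - u) * (f t₀ / 2) ≤ ∫ t in u..v, f t := by
    calc (v - u) * (f t₀ / 2) = ∫ _t in u..v, f t₀ / 2 := by
          rw [intervalIntegral.integral_const, smul_eq_mul]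
      _ ≤ ∫ t in u..v, f t :=
          intervalIntegral.integral_mono_on huv.le intervalIntegrable_const hi2 hmid
  have : 0 < (v - u) * (f t₀ / 2) := by
    apply mul_pos <;> [linarith; positivity]
  linarith [hsplit, hint]

/-- The key integral identity: for any feasible `s`, `∫ s³/r = a ∫ s³/r₀`. -/
lemma key_integral (r₀ r : ℝ → ℝ)
    (hr₀c : ContinuousOn r₀ (Icc 0 (2 * π)))
    (hr₀pos : ∀ t ∈ Icc (0 : ℝ) (2 * π), 0 < r₀ t)
    (a b c : ℝ)
    (hform : ∀ t ∈ Icc (0 : ℝ) (2 * π),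
      1 / r t = a / r₀ t + b * Real.cos t + c * Real.sin t)
    (s : ℝ → ℝ) (hs : Feasible s) :
    (∫ t in (0 : ℝ)..(2 * π), s t ^ 3 / r t) =
      a * ∫ t in (0 : ℝ)..(2 * π), s t ^ 3 / r₀ t := by
  obtain ⟨hsc, hspos, _, hcos, hsin⟩ := hs
  have h2π : (0:ℝ) ≤ 2 * π := by positivity
  have hi1 : IntervalIntegrable (fun t => s t ^ 3 / r₀ t) MeasureTheory.volume 0 (2*π) := by
    apply ContinuousOn.intervalIntegrable
    rw [uIcc_of_le h2π]
    exact (hsc.pow 3).div hr₀c (fun t ht => (hr₀pos t ht).ne')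
  have hi2 : IntervalIntegrable (fun t => s t ^ 3 * Real.cos t) MeasureTheory.volume 0 (2*π) := by
    apply ContinuousOn.intervalIntegrable
    rw [uIcc_of_le h2π]
    exact (hsc.pow 3).mul continuous_cos.continuousOn
  have hi3 : IntervalIntegrable (fun t => s t ^ 3 * Real.sin t) MeasureTheory.volume 0 (2*π) := by
    apply ContinuousOn.intervalIntegrable
    rw [uIcc_of_le h2π]
    exact (hsc.pow 3).mul continuous_sin.continuousOn
  have hcongr : (∫ t in (0:ℝ)..(2*π), s t ^ 3 / r t) =
      ∫ t in (0:ℝ)..(2*π),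
        (a * (s t ^ 3 / r₀ t) + b * (s t ^ 3 * Real.cos t) + c * (s t ^ 3 * Real.sin t)) := by
    apply intervalIntegral.integral_congr
    intro t ht
    rw [uIcc_of_le h2π] at ht
    have h0 := hform t ht
    calc s t ^ 3 / r t = s t ^ 3 * (1 / r t) := by ring
      _ = s t ^ 3 * (a / r₀ t + b * Real.cos t + c * Real.sin t) := by rw [h0]
      _ = a * (s t ^ 3 / r₀ t) + b * (s t ^ 3 * Real.cos t) + c * (s t ^ 3 * Real.sin t) := by
          ring
  rw [hcongr, intervalIntegral.integral_add ((hi1.const_mul a).add (hi2.const_mul b))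
      (hi3.const_mul c),
    intervalIntegral.integral_add (hi1.const_mul a) (hi2.const_mul b),
    intervalIntegral.integral_const_mul, intervalIntegral.integral_const_mul,
    intervalIntegral.integral_const_mul, hcos, hsin]
  ring

theorem stmt13 (r₀ r rs : ℝ → ℝ)
    (hr₀c : ContinuousOn r₀ (Icc 0 (2 * π))) (hr₀pos : ∀ t ∈ Icc (0 : ℝ) (2 * π), 0 < r₀ t)
    (hper : r₀ 0 = r₀ (2 * π))
    (a b c : ℝ) (ha : 0 < a)
    (hform : ∀ t ∈ Icc (0 : ℝ) (2 * π),
      1 / r t = a / r₀ t + b * Real.cos t + c * Real.sin t)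
    (hrfeas : Feasible r) (hrsfeas : Feasible rs) :
    (∫ t in (0 : ℝ)..(2 * π), rs t ^ 3 / r t) =
        a * ∫ t in (0 : ℝ)..(2 * π), rs t ^ 3 / r₀ t ∧
    (∫ t in (0 : ℝ)..(2 * π), r t ^ 3 / r t) =
        a * ∫ t in (0 : ℝ)..(2 * π), r t ^ 3 / r₀ t ∧
    ((∀ s : ℝ → ℝ, Feasible s →
        (∫ t in (0 : ℝ)..(2 * π), r t ^ 3 / r₀ t) ≤ ∫ t in (0 : ℝ)..(2 * π), s t ^ 3 / r₀ t) →
     (∀ s : ℝ → ℝ, Feasible s →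
        (∫ t in (0 : ℝ)..(2 * π), rs t ^ 3 / r₀ t) ≤ ∫ t in (0 : ℝ)..(2 * π), s t ^ 3 / r₀ t) →
     (∀ s : ℝ → ℝ, Feasible s →
        (∫ t in (0 : ℝ)..(2 * π), rs t ^ 3 / r t) ≤ ∫ t in (0 : ℝ)..(2 * π), s t ^ 3 / r t) ∧
     ∀ t ∈ Icc (0 : ℝ) (2 * π), rs t = r t) := by
  have h2π : (0:ℝ) ≤ 2 * π := by positivity
  have K : ∀ s : ℝ → ℝ, Feasible s →
      (∫ t in (0:ℝ)..(2*π), s t ^ 3 / r t) = a * ∫ t in (0:ℝ)..(2*π), s t ^ 3 / r₀ t :=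
    key_integral r₀ r hr₀c hr₀pos a b c hform
  refine ⟨K rs hrsfeas, K r hrfeas, ?_⟩
  intro hminr hminrs
  constructor
  · intro s hs
    rw [K rs hrsfeas, K s hs]
    exact mul_le_mul_of_nonneg_left (hminrs s hs) ha.le
  -- equality of minimum values
  have heq : (∫ t in (0:ℝ)..(2*π), r t ^ 3 / r₀ t) = ∫ t in (0:ℝ)..(2*π), rs t ^ 3 / r₀ t :=
    le_antisymm (hminr rs hrsfeas) (hminrs r hrfeas)
  obtain ⟨hrc, hrpos, harea_r, _, _⟩ := id hrfeas
  obtain ⟨hrsc, hrspos, harea_rs, _, _⟩ := id hrsfeas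
  have harea_r' : (∫ t in (0:ℝ)..(2*π), r t ^ 2) = 2 := by linarith
  have harea_rs' : (∫ t in (0:ℝ)..(2*π), rs t ^ 2) = 2 := by linarith
  have hrr : (∫ t in (0:ℝ)..(2*π), r t ^ 3 / r t) = ∫ t in (0:ℝ)..(2*π), r t ^ 2 := by
    apply intervalIntegral.integral_congr
    intro t ht
    rw [uIcc_of_le h2π] at ht
    have hne := (hrpos t ht).ne'
    field_simp
  have hval : (∫ t in (0:ℝ)..(2*π), rs t ^ 3 / r t) = 2 := by
    rw [K rs hrsfeas, ← heq, ← K r hrfeas, hrr, harea_r']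
  -- the excess function
  set F : ℝ → ℝ := fun t => rs t ^ 3 / r t - (3/2) * rs t ^ 2 + (1/2) * r t ^ 2 with hF
  have hFc : ContinuousOn F (Icc 0 (2*π)) := by
    apply ContinuousOn.add
    · exact ((hrsc.pow 3).div hrc (fun t ht => (hrpos t ht).ne')).sub
        (continuousOn_const.mul (hrsc.pow 2))
    · exact continuousOn_const.mul (hrc.pow 2)
  have hF0 : ∀ t ∈ Icc (0:ℝ) (2*π), 0 ≤ F t := by
    intro t ht
    have h1 := hrpos t ht
    have h2 := hrspos t ht
    have hfact : F t = ((rs t - r t) ^ 2 * (2 * rs t + r t)) / (2 * r t) := by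
      simp only [hF]
      field_simp
      ring
    rw [hfact]
    exact div_nonneg (mul_nonneg (sq_nonneg _) (by linarith)) (by linarith)
  have hi_g1 : IntervalIntegrable (fun t => rs t ^ 3 / r t) MeasureTheory.volume 0 (2*π) := by
    apply ContinuousOn.intervalIntegrable
    rw [uIcc_of_le h2π]
    exact (hrsc.pow 3).div hrc (fun t ht => (hrpos t ht).ne')
  have hi_g2 : IntervalIntegrable (fun t => rs t ^ 2) MeasureTheory.volume 0 (2*π) := by
    apply ContinuousOn.intervalIntegrable
    rw [uIcc_of_le h2π]
    exact hrsc.pow 2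
  have hi_g3 : IntervalIntegrable (fun t => r t ^ 2) MeasureTheory.volume 0 (2*π) := by
    apply ContinuousOn.intervalIntegrable
    rw [uIcc_of_le h2π]
    exact hrc.pow 2
  have hFint : (∫ t in (0:ℝ)..(2*π), F t) = 0 := by
    simp only [hF]
    rw [intervalIntegral.integral_add (hi_g1.sub (hi_g2.const_mul (3/2)))
        (hi_g3.const_mul (1/2)),
      intervalIntegral.integral_sub hi_g1 (hi_g2.const_mul (3/2)),
      intervalIntegral.integral_const_mul, intervalIntegral.integral_const_mul,
      hval, harea_rs', harea_r']
    ring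
  have hzero := zero_of_nonneg_of_integral_zero F hFc hF0 hFint
  intro t ht
  have h1 := hrpos t ht
  have h2 := hrspos t ht
  have hfact : F t = ((rs t - r t) ^ 2 * (2 * rs t + r t)) / (2 * r t) := by
    simp only [hF]
    field_simp
    ring
  have hFt := hzero t ht
  rw [hfact] at hFt
  have hnum : (rs t - r t) ^ 2 * (2 * rs t + r t) = 0 := by
    rcases div_eq_zero_iff.mp hFt with h | h
    · exact h
    · linarith
  rcases mul_eq_zero.mp hnum with h | h
  · have := pow_eq_zero_iff (n := 2) (by norm_num) |>.mp h
    linarith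
  · linarith
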